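/- Let G be a finite simple graph and M a matching of G. Let H1 and H2 be factor-critical subgraphs of G such that there exists a vertex v ∈ V(H1) ∩ V(H2) and, for each i = 1, 2, the set M ∩ E(Hi) is a near-perfect matching of Hi exposing exactly the vertex v. Then the union H1 ∪ H2 is factor-critical. -/

import Mathlib

open SimpleGraph

variable {V : Type*}

/-- A set of edges is pairwise vertex-disjoint. -/
def DisjointEdges (N : Set (Sym2 V)) : Prop :=
  ∀ e ∈ N, ∀ f ∈ N, e ≠ f → ∀ x : V, x ∈ e → x ∉ f

/-- `M` is a matching of `G`: a set of pairwise vertex-disjoint edges of `G`. -/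
def IsMatchingSet (G : SimpleGraph V) (M : Set (Sym2 V)) : Prop :=
  M ⊆ G.edgeSet ∧ DisjointEdges M

/-- `M` is a perfect matching of `G`: a matching covering every vertex. -/
def IsPerfectMatchingSet (G : SimpleGraph V) (M : Set (Sym2 V)) : Prop :=
  IsMatchingSet G M ∧ ∀ v : V, ∃ e ∈ M, v ∈ e

/-- `M` is a near-perfect matching of `G` whose unique exposed vertex is `v`. -/
def IsNearPerfectMatchingSet (G : SimpleGraph V) (M : Set (Sym2 V)) (v : V) : Prop :=
  IsMatchingSet G M ∧ (∀ e ∈ M, v ∉ e) ∧ ∀ u : V, u ≠ v → ∃ e ∈ M, u ∈ e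

/-- The induced subgraph `G[X]` has a perfect matching. -/
def HasPMOn (G : SimpleGraph V) (X : Set V) : Prop :=
  ∃ M : Set (Sym2 V), IsMatchingSet G M ∧ (∀ e ∈ M, ∀ x : V, x ∈ e → x ∈ X) ∧
    ∀ v ∈ X, ∃ e ∈ M, v ∈ e

/-- `G` is factorizable: it has a perfect matching. -/
def Factorizable (G : SimpleGraph V) : Prop :=
  ∃ M : Set (Sym2 V), IsPerfectMatchingSet G M

/-- `G` is factor-critical: deleting any single vertex leaves a factorizable graph. -/
def FactorCritical (G : SimpleGraph V) : Prop :=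
  ∀ v : V, HasPMOn G {v}ᶜ

/-- A walk is `M`-alternating: its edges outside `M` are pairwise vertex-disjoint. -/
def MAlternating (M : Set (Sym2 V)) {G : SimpleGraph V} {u v : V} (p : G.Walk u v) : Prop :=
  ∀ e ∈ p.edges, ∀ f ∈ p.edges, e ∉ M → f ∉ M → e ≠ f → ∀ x : V, x ∈ e → x ∉ f

/-- An `M`-saturated path: a path with an odd number of edges such that `M ∩ E(P)`
is a perfect matching of `P`. -/
def IsSaturatedPath (M : Set (Sym2 V)) {G : SimpleGraph V} {u v : V} (p : G.Walk u v) : Prop :=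
  p.IsPath ∧ Odd p.length ∧ ∀ x ∈ p.support, ∃ e ∈ p.edges, e ∈ M ∧ x ∈ e

/-- An `M`-exposed path: a path with an odd number of edges such that `E(P) \ M`
is a perfect matching of `P`. -/
def IsExposedPath (M : Set (Sym2 V)) {G : SimpleGraph V} {u v : V} (p : G.Walk u v) : Prop :=
  p.IsPath ∧ Odd p.length ∧ ∀ x ∈ p.support, ∃ e ∈ p.edges, e ∉ M ∧ x ∈ e

/-- An `M`-balanced path from `u` to `v`: an `M`-alternating path with an even number
of edges whose first edge (the one incident with `u`) belongs to `M`; a trivial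
one-vertex path is `M`-balanced. -/
def IsBalancedPath (M : Set (Sym2 V)) {G : SimpleGraph V} {u v : V} (p : G.Walk u v) : Prop :=
  p.IsPath ∧ Even p.length ∧ MAlternating M p ∧ ∀ e ∈ p.edges.head?, e ∈ M

/-- An edge of `G` is allowed if it lies in some perfect matching of `G`. -/
def Allowed (G : SimpleGraph V) (e : Sym2 V) : Prop :=
  ∃ M : Set (Sym2 V), IsPerfectMatchingSet G M ∧ e ∈ M

/-- The spanning subgraph of `G` formed by its allowed edges. -/
def allowedSubgraph (G : SimpleGraph V) : SimpleGraph V where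
  Adj u v := G.Adj u v ∧ Allowed G s(u, v)
  symm := by
    constructor
    intro u v h
    refine ⟨h.1.symm, ?_⟩
    rw [Sym2.eq_swap]
    exact h.2
  loopless := ⟨fun v h => G.loopless.irrefl v h.1⟩

/-- `C` is (the vertex set of) a factor-component of `G`: a connected component of the
spanning subgraph of `G` formed by the allowed edges (the factor-component itself being
the induced subgraph `G[C]`). -/
def IsFactorComponent (G : SimpleGraph V) (C : Set V) : Prop :=
  ∃ c : (allowedSubgraph G).ConnectedComponent, C = c.supp

/-- `G` is elementary: it is factorizable and has exactly one factor-component. -/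
def Elementary (G : SimpleGraph V) : Prop :=
  Factorizable G ∧ (allowedSubgraph G).Connected

/-- `X` is a separating set of `G`. -/
def Separating (G : SimpleGraph V) (X : Set V) : Prop :=
  ∀ C : Set V, IsFactorComponent G C → C ⊆ X ∨ Disjoint C X

/-- The contraction `G[X]/S`: the induced subgraph of `G` on `X` with `S` contracted
to a single vertex (the vertex `none`), deleting loops and parallel edges. -/
def contractOn (G : SimpleGraph V) (X S : Set V) : SimpleGraph (Option ↥(X \ S)) where
  Adj a b :=
    match a, b with
    | some x, some y => G.Adj x.1 y.1
    | some x, none => ∃ s ∈ S, G.Adj x.1 s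
    | none, some y => ∃ s ∈ S, G.Adj y.1 s
    | none, none => False
  symm := by
    constructor
    rintro (_ | x) (_ | y) h
    · exact h.elim
    · exact h
    · exact h
    · exact h.symm
  loopless := by
    constructor
    rintro (_ | x) h
    · exact h.elim
    · exact G.loopless.irrefl x.1 h

/-- `X` is a critical-inducing set for the factor-component (with vertex set) `C1`:
a separating set containing `C1` such that `G[X]/C1` is factor-critical. -/
def CriticalInducing (G : SimpleGraph V) (C1 X : Set V) : Prop :=
  Separating G X ∧ C1 ⊆ X ∧ FactorCritical (contractOn G X C1)

/-- `C1 ⊵ C2`: there is a critical-inducing set for `C1` to `C2`. -/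
def Yield (G : SimpleGraph V) (C1 C2 : Set V) : Prop :=
  ∃ X : Set V, CriticalInducing G C1 X ∧ C2 ⊆ X

/-- `u ∼ v`: `u = v` or `G - u - v` has no perfect matching. -/
def SimRel (G : SimpleGraph V) (u v : V) : Prop :=
  u = v ∨ ¬ HasPMOn G (({u, v} : Set V)ᶜ)

/-- An `M`-ear relative to the vertex set `X`: a path whose two end vertices lie in `X`
and whose internal vertices do not (or a cycle with exactly one vertex in `X`), such
that the ear minus `X` is an `M`-saturated path. -/
def IsMEar (G : SimpleGraph V) (M : Set (Sym2 V)) (X : Set V) {u v : V}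
    (p : G.Walk u v) : Prop :=
  u ∈ X ∧ v ∈ X ∧ ((∃ h : u = v, (p.copy rfl h.symm).IsCycle) ∨ (u ≠ v ∧ p.IsPath)) ∧
  ∃ (x y : V) (hux : G.Adj u x) (q : G.Walk x y) (hyv : G.Adj y v),
    p = SimpleGraph.Walk.cons hux (q.concat hyv) ∧
    IsSaturatedPath M q ∧ ∀ w ∈ q.support, w ∉ X

/-- An `M`-ear relative to `X` through (the factor-component with vertex set) `C`:
some internal vertex of the ear lies in `C`. -/
def IsMEarThrough (G : SimpleGraph V) (M : Set (Sym2 V)) (X C : Set V) {u v : V}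
    (p : G.Walk u v) : Prop :=
  IsMEar G M X p ∧ ∃ w ∈ p.support, w ∉ X ∧ w ∈ C

/-- An `M`-ear sequence `(H 0, …, H k)` of pairwise distinct factor-components,
where for each `i` there is an `M`-ear relative to `H i` through `H (i+1)`. -/
def IsMEarSequence (G : SimpleGraph V) (M : Set (Sym2 V)) (k : ℕ)
    (H : Fin (k + 1) → Set V) : Prop :=
  (∀ i, IsFactorComponent G (H i)) ∧ Function.Injective H ∧
  ∀ i : Fin k, ∃ (u v : V) (p : G.Walk u v),
    IsMEarThrough G M (H i.castSucc) (H i.succ) p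

/-- A subgraph `H` of `G` is factor-critical: for every `v ∈ V(H)`, `H - v` has a
perfect matching. -/
def SubgraphFactorCritical (G : SimpleGraph V) (H : G.Subgraph) : Prop :=
  ∀ v ∈ H.verts, ∃ N : Set (Sym2 V), N ⊆ H.edgeSet ∧ DisjointEdges N ∧
    (∀ e ∈ N, v ∉ e) ∧ ∀ u ∈ H.verts, u ≠ v → ∃ e ∈ N, u ∈ e

/-!
Fix `w ∈ V(H₁)`, a perfect matching `N` of `H₁ - w`, and put `M₁ = M ∩ E(H₁)`. The partner maps
of `M₁` and `N` are involutions of `V(H₁)` whose only fixed points are `v` and `w`, so by parity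
the set `R` of vertices reached from `w` by applying them alternately contains `v`. An edge of
`M ∩ (E(H₁) ∪ E(H₂))` meeting `R` avoids `v`, hence is the `M₁`-edge at a vertex of `R` and lies
inside `R`. So exchanging, on `R`, the edges of `M ∩ (E(H₁) ∪ E(H₂))` for those of `N` gives a
perfect matching of `(H₁ ∪ H₂) - w`.
-/

open Function Relation

lemma DisjointEdges.eq_of_mem {N : Set (Sym2 V)} (hN : DisjointEdges N) {e f : Sym2 V} {x : V}
    (he : e ∈ N) (hf : f ∈ N) (hxe : x ∈ e) (hxf : x ∈ f) : e = f :=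
  by_contra fun hef => hN e he f hf hef x hxe hxf

lemma DisjointEdges.mono {N N' : Set (Sym2 V)} (hN : DisjointEdges N) (h : N' ⊆ N) :
    DisjointEdges N' :=
  fun e he f hf => hN e (h he) f (h hf)

lemma DisjointEdges.union {A B : Set (Sym2 V)} (hA : DisjointEdges A) (hB : DisjointEdges B)
    (hAB : ∀ e ∈ A, ∀ f ∈ B, ∀ x ∈ e, x ∉ f) : DisjointEdges (A ∪ B) := by
  rintro e (he | he) f (hf | hf) hef x hxe hxf
  · exact hA e he f hf hef x hxe hxf
  · exact hAB e he f hf x hxe hxf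
  · exact hAB f hf e he x hxf hxe
  · exact hB e he f hf hef x hxe hxf

section Partner

variable {N : Set (Sym2 V)} {u : V}

/-- Uncovered vertices are fixed, so that for a matching `N` the map `partner N` is an
involution whose fixed points are the vertices `N` leaves exposed. -/
noncomputable def partner (N : Set (Sym2 V)) (u : V) : V :=
  open Classical in
  if h : ∃ e ∈ N, u ∈ e then Sym2.Mem.other h.choose_spec.2 else u

lemma partner_mem (h : ∃ e ∈ N, u ∈ e) : s(u, partner N u) ∈ N := by
  rw [partner, dif_pos h, Sym2.other_spec]
  exact h.choose_spec.1

lemma partner_eq_self (h : ¬ ∃ e ∈ N, u ∈ e) : partner N u = u := by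
  rw [partner, dif_neg h]

lemma partner_ne_self {G : SimpleGraph V} (hNG : N ⊆ G.edgeSet) (h : ∃ e ∈ N, u ∈ e) :
    partner N u ≠ u := fun heq =>
  not_isDiag_of_mem_edgeSet G (hNG (partner_mem h)) (by rw [heq]; rfl)

lemma partner_mem_verts {G : SimpleGraph V} {H : G.Subgraph} (hNH : N ⊆ H.edgeSet)
    (hu : u ∈ H.verts) : partner N u ∈ H.verts := by
  by_cases h : ∃ e ∈ N, u ∈ e
  · exact H.mem_verts_of_mem_edge (hNH (partner_mem h)) (Sym2.mem_mk_right _ _)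
  · rwa [partner_eq_self h]

lemma DisjointEdges.eq_partner (hN : DisjointEdges N) {e : Sym2 V} (he : e ∈ N) (hu : u ∈ e) :
    e = s(u, partner N u) :=
  hN.eq_of_mem he (partner_mem ⟨e, he, hu⟩) hu (Sym2.mem_mk_left _ _)

lemma DisjointEdges.partner_involutive (hN : DisjointEdges N) : Involutive (partner N) := by
  intro u
  by_cases h : ∃ e ∈ N, u ∈ e
  · have hedge := hN.eq_partner (partner_mem h) (Sym2.mem_mk_right u (partner N u))
    rcases Sym2.eq_iff.mp hedge with ⟨h₁, h₂⟩ | ⟨hu, -⟩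
    · exact (h₁.trans h₂).symm
    · exact hu.symm
  · rw [partner_eq_self h, partner_eq_self h]

end Partner

section Involution

variable {α : Type*} {f g : α → α}

lemma Function.Involutive.even_card_filter_ne [DecidableEq α] (hf : Involutive f)
    {s : Finset α} (hs : ∀ x ∈ s, f x ∈ s) : Even (s.filter fun x => f x ≠ x).card := by
  rw [← ZMod.natCast_eq_zero_iff_even, Finset.card_eq_sum_ones, Nat.cast_sum]
  refine Finset.sum_involution (fun x _ => f x) (fun _ _ => by decide) (fun x hx _ => ?_)
    (fun x hx => ?_) (fun x _ => hf x)
  · exact (Finset.mem_filter.mp hx).2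
  · obtain ⟨hxs, hfx⟩ := Finset.mem_filter.mp hx
    exact Finset.mem_filter.mpr ⟨hs x hxs, fun h => hfx (hf.injective h)⟩

/-- Otherwise, on the set reached from `w`, `f` would have no fixed point and `g` exactly one,
while both counts have the parity of that set. -/
theorem Function.Involutive.exists_reachable_fixed [Finite α] (hf : Involutive f)
    (hg : Involutive g) {w : α} (hgw : g w = w) :
    ∃ x, ReflTransGen (fun a b => b = f a ∨ b = g a) w x ∧ (f x = x ∨ (g x = x ∧ x ≠ w)) := by
  classical
  have := Fintype.ofFinite α
  by_contra! hnone
  set s := Finset.univ.filter (ReflTransGen (fun a b => b = f a ∨ b = g a) w)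
  have hs : ∀ {x}, x ∈ s ↔ ReflTransGen (fun a b => b = f a ∨ b = g a) w x := by simp [s]
  have hfs : s.filter (fun x => f x ≠ x) = s :=
    Finset.filter_true_of_mem fun x hx => (hnone x (hs.mp hx)).1
  have hgs : s.filter (fun x => g x ≠ x) = s.erase w := by
    ext x
    simp only [Finset.mem_filter, Finset.mem_erase]
    exact ⟨fun ⟨hx, hgx⟩ => ⟨fun h => hgx (h ▸ hgw), hx⟩,
      fun ⟨hxw, hx⟩ => ⟨hx, fun hgx => hxw ((hnone x (hs.mp hx)).2 hgx)⟩⟩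
  have hodd := Finset.card_erase_add_one (hs.mpr ReflTransGen.refl)
  have hf_even := hf.even_card_filter_ne fun x hx => hs.mpr ((hs.mp hx).tail (Or.inl rfl))
  have hg_even := hg.even_card_filter_ne fun x hx => hs.mpr ((hs.mp hx).tail (Or.inr rfl))
  rw [hfs, ← hodd] at hf_even
  rw [hgs] at hg_even
  exact Nat.not_even_iff_odd.mpr hg_even.add_one hf_even

end Involution

section Swap

variable {A N : Set (Sym2 V)} {R : Set V}

def swapOn (A N : Set (Sym2 V)) (R : Set V) : Set (Sym2 V) :=
  {e ∈ A | ∀ x ∈ e, x ∉ R} ∪ {e ∈ N | ∀ x ∈ e, x ∈ R}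

lemma swapOn_subset : swapOn A N R ⊆ A ∪ N :=
  Set.union_subset_union (fun _ he => he.1) (fun _ he => he.1)

lemma DisjointEdges.swapOn (hA : DisjointEdges A) (hN : DisjointEdges N) :
    DisjointEdges (swapOn A N R) :=
  (hA.mono fun _ he => he.1).union (hN.mono fun _ he => he.1)
    fun _ he _ hf x hxe hxf => he.2 x hxe (hf.2 x hxf)

lemma notMem_of_mem_swapOn {w : V} {e : Sym2 V} (hwR : w ∈ R) (hNw : ∀ e ∈ N, w ∉ e)
    (he : e ∈ swapOn A N R) : w ∉ e := by
  rcases he with ⟨-, he⟩ | ⟨he, -⟩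
  exacts [fun hwe => he w hwe hwR, hNw e he]

lemma exists_mem_swapOn_of_mem {x : V} (hxN : ∃ e ∈ N, x ∈ e ∧ ∀ y ∈ e, y ∈ R) :
    ∃ e ∈ swapOn A N R, x ∈ e :=
  let ⟨e, he, hxe, heR⟩ := hxN
  ⟨e, Or.inr ⟨he, heR⟩, hxe⟩

lemma exists_mem_swapOn_of_not_mem {x : V} (hx : x ∉ R)
    (hAR : ∀ e ∈ A, ∀ y ∈ e, y ∈ R → ∀ z ∈ e, z ∈ R) (hxA : ∃ e ∈ A, x ∈ e) :
    ∃ e ∈ swapOn A N R, x ∈ e :=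
  let ⟨e, he, hxe⟩ := hxA
  ⟨e, Or.inl ⟨he, fun y hye hyR => hx (hAR e he y hye hyR x hxe)⟩, hxe⟩

end Swap

lemma ReflTransGen.mem_of_invariant {α : Type*} {r : α → α → Prop} {S : Set α}
    (hS : ∀ a b, r a b → a ∈ S → b ∈ S) {w x : α} (hw : w ∈ S) (h : ReflTransGen r w x) :
    x ∈ S := by
  induction h with
  | refl => exact hw
  | tail _ hbc ih => exact hS _ _ hbc ih

section AlternatingReach

variable {G : SimpleGraph V} {H : G.Subgraph} {A N : Set (Sym2 V)} {w : V}

def alternatingReach (A N : Set (Sym2 V)) (w : V) : Set V :=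
  {x | ReflTransGen (fun a b => b = partner A a ∨ b = partner N a) w x}

lemma start_mem_alternatingReach : w ∈ alternatingReach A N w := ReflTransGen.refl

lemma partner_left_mem_alternatingReach {x : V} (hx : x ∈ alternatingReach A N w) :
    partner A x ∈ alternatingReach A N w :=
  ReflTransGen.tail hx (Or.inl rfl)

lemma partner_right_mem_alternatingReach {x : V} (hx : x ∈ alternatingReach A N w) :
    partner N x ∈ alternatingReach A N w :=
  ReflTransGen.tail hx (Or.inr rfl)

lemma alternatingReach_subset_verts (hAH : A ⊆ H.edgeSet) (hNH : N ⊆ H.edgeSet)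
    (hw : w ∈ H.verts) : alternatingReach A N w ⊆ H.verts := fun _ =>
  ReflTransGen.mem_of_invariant (S := H.verts) (by
    rintro a b (rfl | rfl) ha
    exacts [partner_mem_verts hAH ha, partner_mem_verts hNH ha]) hw

theorem mem_alternatingReach_of_exposed [Finite V] {v : V} (hA : DisjointEdges A)
    (hAH : A ⊆ H.edgeSet) (hAcov : ∀ u ∈ H.verts, u ≠ v → ∃ e ∈ A, u ∈ e)
    (hN : DisjointEdges N) (hNH : N ⊆ H.edgeSet) (hNw : ∀ e ∈ N, w ∉ e)
    (hNcov : ∀ u ∈ H.verts, u ≠ w → ∃ e ∈ N, u ∈ e) (hw : w ∈ H.verts) :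
    v ∈ alternatingReach A N w := by
  have hRH := alternatingReach_subset_verts hAH hNH hw
  obtain ⟨x, hxR, hx | ⟨hx, hxw⟩⟩ := hA.partner_involutive.exists_reachable_fixed
    hN.partner_involutive (partner_eq_self fun ⟨e, he, hwe⟩ => hNw e he hwe)
  · by_contra hvR
    have hxv : x ≠ v := fun h => hvR (h ▸ hxR)
    exact partner_ne_self (hAH.trans H.edgeSet_subset) (hAcov x (hRH hxR) hxv) hx
  · exact absurd hx (partner_ne_self (hNH.trans H.edgeSet_subset) (hNcov x (hRH hxR) hxw))

end AlternatingReach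

theorem SubgraphFactorCritical.exists_matching_sup_avoiding [Finite V] {G : SimpleGraph V}
    {M : Set (Sym2 V)} (hM : DisjointEdges M) {H₁ H₂ : G.Subgraph}
    (h₁ : SubgraphFactorCritical G H₁) {v : V}
    (hnp₁ : (∀ e ∈ M ∩ H₁.edgeSet, v ∉ e) ∧
      ∀ u ∈ H₁.verts, u ≠ v → ∃ e ∈ M ∩ H₁.edgeSet, u ∈ e)
    (hnp₂ : (∀ e ∈ M ∩ H₂.edgeSet, v ∉ e) ∧
      ∀ u ∈ H₂.verts, u ≠ v → ∃ e ∈ M ∩ H₂.edgeSet, u ∈ e)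
    {w : V} (hw : w ∈ H₁.verts) :
    ∃ N : Set (Sym2 V), N ⊆ (H₁ ⊔ H₂).edgeSet ∧ DisjointEdges N ∧
      (∀ e ∈ N, w ∉ e) ∧ ∀ u ∈ (H₁ ⊔ H₂).verts, u ≠ w → ∃ e ∈ N, u ∈ e := by
  obtain ⟨N, hNH, hN, hNw, hNcov⟩ := h₁ w hw
  set M₁ := M ∩ H₁.edgeSet
  set M' := M₁ ∪ M ∩ H₂.edgeSet
  have hM₁ : DisjointEdges M₁ := hM.mono Set.inter_subset_left
  have hM₁H : M₁ ⊆ H₁.edgeSet := Set.inter_subset_right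
  have hM' : DisjointEdges M' :=
    hM.mono (Set.union_subset Set.inter_subset_left Set.inter_subset_left)
  set R := alternatingReach M₁ N w
  have hRH : R ⊆ H₁.verts := alternatingReach_subset_verts hM₁H hNH hw
  have hvR : v ∈ R := mem_alternatingReach_of_exposed hM₁ hM₁H hnp₁.2 hN hNH hNw hNcov hw
  have hRM' : ∀ e ∈ M', ∀ x ∈ e, x ∈ R → ∀ y ∈ e, y ∈ R := by
    intro e he x hxe hxR y hye
    have hxv : x ≠ v := by
      rintro rfl
      rcases he with he | he
      exacts [hnp₁.1 e he hxe, hnp₂.1 e he hxe]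
    obtain ⟨f, hf, hxf⟩ := hnp₁.2 x (hRH hxR) hxv
    rw [hM'.eq_of_mem he (Or.inl hf) hxe hxf, hM₁.eq_partner hf hxf, Sym2.mem_iff] at hye
    rcases hye with rfl | rfl
    exacts [hxR, partner_left_mem_alternatingReach hxR]
  refine ⟨swapOn M' N R, ?_, hM'.swapOn hN, fun _ =>
    notMem_of_mem_swapOn start_mem_alternatingReach hNw, fun u hu huw => ?_⟩
  · rw [Subgraph.edgeSet_sup]
    refine swapOn_subset.trans (Set.union_subset ?_ (hNH.trans Set.subset_union_left))
    exact Set.union_subset_union Set.inter_subset_right Set.inter_subset_right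
  by_cases huR : u ∈ R
  · refine exists_mem_swapOn_of_mem
      ⟨_, partner_mem (hNcov u (hRH huR) huw), Sym2.mem_mk_left _ _, fun y hy => ?_⟩
    rcases Sym2.mem_iff.mp hy with rfl | rfl
    exacts [huR, partner_right_mem_alternatingReach huR]
  · have huv : u ≠ v := fun h => huR (h ▸ hvR)
    refine exists_mem_swapOn_of_not_mem huR hRM' ?_
    rcases hu with hu | hu
    · obtain ⟨e, he, hue⟩ := hnp₁.2 u hu huv; exact ⟨e, Or.inl he, hue⟩
    · obtain ⟨e, he, hue⟩ := hnp₂.2 u hu huv; exact ⟨e, Or.inr he, hue⟩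

theorem statement_16_general {V : Type*} [Fintype V] (G : SimpleGraph V)
    (M : Set (Sym2 V)) (hM : IsMatchingSet G M)
    (H1 H2 : G.Subgraph)
    (h1 : SubgraphFactorCritical G H1) (h2 : SubgraphFactorCritical G H2)
    (v : V)
    (hnp1 : (∀ e ∈ M ∩ H1.edgeSet, v ∉ e) ∧
      ∀ u ∈ H1.verts, u ≠ v → ∃ e ∈ M ∩ H1.edgeSet, u ∈ e)
    (hnp2 : (∀ e ∈ M ∩ H2.edgeSet, v ∉ e) ∧
      ∀ u ∈ H2.verts, u ≠ v → ∃ e ∈ M ∩ H2.edgeSet, u ∈ e) :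
    SubgraphFactorCritical G (H1 ⊔ H2) := by
  rintro w (hw | hw)
  · exact h1.exists_matching_sup_avoiding hM.2 hnp1 hnp2 hw
  · rw [sup_comm]
    exact h2.exists_matching_sup_avoiding hM.2 hnp2 hnp1 hw

/-- Let `G` be a finite simple graph, `M` a matching of `G`, and
`H1, H2` factor-critical subgraphs of `G` sharing a vertex `v` such that for each `i`,
`M ∩ E(Hi)` is a near-perfect matching of `Hi` exposing exactly `v`. Then `H1 ∪ H2` is
factor-critical. -/
theorem statement_16 {V : Type*} [Fintype V] (G : SimpleGraph V)
    (M : Set (Sym2 V)) (hM : IsMatchingSet G M)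
    (H1 H2 : G.Subgraph)
    (h1 : SubgraphFactorCritical G H1) (h2 : SubgraphFactorCritical G H2)
    (v : V) (hv1 : v ∈ H1.verts) (hv2 : v ∈ H2.verts)
    (hnp1 : (∀ e ∈ M ∩ H1.edgeSet, v ∉ e) ∧
      ∀ u ∈ H1.verts, u ≠ v → ∃ e ∈ M ∩ H1.edgeSet, u ∈ e)
    (hnp2 : (∀ e ∈ M ∩ H2.edgeSet, v ∉ e) ∧
      ∀ u ∈ H2.verts, u ≠ v → ∃ e ∈ M ∩ H2.edgeSet, u ∈ e) :
    SubgraphFactorCritical G (H1 ⊔ H2) :=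
  statement_16_general G M hM H1 H2 h1 h2 v hnp1 hnp2
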